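/- arXiv:1910.12915 — 2 statements merged into one kernel-verified Lean document; each statement's English description precedes it below -/
import Mathlib

section
/- Lemma 2.18 of the paper (symmetric-power case): let a, b ≥ 1 be integers and set w(i,j) := (2i+1−a) + (2j+1−b) for 0 ≤ i < a, 0 ≤ j < b. Then for every n ≥ 0, the Laurent polynomial h_n := Σ_μ t^{Σ_{(i,j)} μ(i,j)·w(i,j)}, where the sum runs over all functions μ from {0,…,a−1}×{0,…,b−1} to ℕ with Σ_{(i,j)} μ(i,j) = n (equivalently, h_n is the coefficient of x^n in the formal power series ∏_{i,j} (1 − t^{w(i,j)} x)^{−1} over ℤ[t,t⁻¹]), is of Lefschetz type. (This coefficient is the character χ_t(Sym^n(V_a ⊗ V_b)) of the n-th symmetric power of the tensor product of the a- and b-dimensional irreducible sl₂-representations.) -/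
open LaurentPolynomial

/-- The quantum number `[m]_t = t^{1-m} + t^{3-m} + ⋯ + t^{m-1}` in `ℤ[t,t⁻¹]`. -/
noncomputable def gauss (m : ℕ) : LaurentPolynomial ℤ :=
  ∑ l ∈ Finset.range m, T (2 * (l : ℤ) + 1 - (m : ℤ))

/-- A Laurent polynomial is of Lefschetz type if it is a finite sum (with nonnegative
integer multiplicities) of the polynomials `[m]_t`, `m ≥ 1`; i.e. it lies in the
additive submonoid generated by them. -/
def IsLefschetz (p : LaurentPolynomial ℤ) : Prop :=
  p ∈ AddSubmonoid.closure (Set.range fun m : ℕ => gauss (m + 1))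

open Finset

private lemma T_mul_apply (c : LaurentPolynomial ℤ) (x d : ℤ) :
    ((T x * c : LaurentPolynomial ℤ)).coeff d = c.coeff (d - x) := by
  have := AddMonoidAlgebra.coeff_single_mul_apply c (1 : ℤ) x d
  rw [LaurentPolynomial.T, this, one_mul, neg_add_eq_sub]

private lemma key_gauss (m : ℕ) :
    (T 1 - T (-1)) * gauss m = T (m : ℤ) - T (-(m : ℤ)) := by
  have h2 := Finset.sum_range_sub (fun l : ℕ => (T (2*(l:ℤ) - m) : LaurentPolynomial ℤ)) m
  have : (T 1 - T (-1)) * gauss m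
      = ∑ l ∈ range m, ((fun l : ℕ => (T (2*(l:ℤ) - m) : LaurentPolynomial ℤ)) (l+1)
          - (fun l : ℕ => (T (2*(l:ℤ) - m) : LaurentPolynomial ℤ)) l) := by
    rw [gauss, Finset.mul_sum]
    refine Finset.sum_congr rfl fun l _ => ?_
    simp only [sub_mul, ← T_add]
    push_cast
    ring_nf
  rw [this, h2, show (2*(m:ℤ)-m) = (m:ℤ) by ring,
    show (2*((0:ℕ):ℤ)-m) = -(m:ℤ) by push_cast; ring]

lemma isLefschetz_of_symm_mono (f : LaurentPolynomial ℤ)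
    (hsym : ∀ d : ℤ, f.coeff (-d) = f.coeff d)
    (hmono : ∀ d : ℤ, 0 ≤ d → f.coeff (d + 2) ≤ f.coeff d) : IsLefschetz f := by
  obtain ⟨M, hM⟩ : ∃ M : ℕ, ∀ d : ℤ, (M : ℤ) ≤ |d| → f.coeff d = 0 := by
    refine ⟨f.coeff.support.sup (fun d => d.natAbs) + 1, fun d hd => ?_⟩
    by_contra h
    have hmem : d ∈ f.coeff.support := Finsupp.mem_support_iff.2 h
    have hle := Finset.le_sup (f := fun d : ℤ => d.natAbs) hmem
    rw [← Int.natCast_natAbs] at hd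
    omega
  set c : ℤ → ℤ := fun m => f.coeff (m - 1) - f.coeff (m + 1) with hc
  have hcnn : ∀ m : ℤ, 1 ≤ m → 0 ≤ c m := by
    intro m hm
    have := hmono (m - 1) (by omega)
    have e : m - 1 + 2 = m + 1 := by ring
    rw [e] at this
    simp only [hc]
    omega
  have hclosure : IsLefschetz (∑ m ∈ range M, (c (m+1)).toNat • gauss (m+1)) := by
    apply AddSubmonoid.sum_mem
    intro m _
    exact AddSubmonoid.nsmul_mem _ (AddSubmonoid.subset_closure (Set.mem_range_self m)) _
  have hfF : f = ∑ m ∈ range M, (c (m+1)).toNat • gauss (m+1) := by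
    have hT : (T 1 - T (-1) : LaurentPolynomial ℤ) ≠ 0 := by
      intro h
      have h1 : ((T 1 - T (-1) : LaurentPolynomial ℤ)).coeff 1 = 0 := by rw [h]; rfl
      rw [AddMonoidAlgebra.coeff_sub, Finsupp.sub_apply, LaurentPolynomial.T_apply, LaurentPolynomial.T_apply] at h1
      norm_num at h1
    apply mul_left_cancel₀ hT
    refine AddMonoidAlgebra.coeff_injective (Finsupp.ext ?_)
    intro d
    have hlhs : ((T 1 - T (-1)) * f : LaurentPolynomial ℤ).coeff d = f.coeff (d - 1) - f.coeff (d + 1) := by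
      rw [sub_mul, AddMonoidAlgebra.coeff_sub, Finsupp.sub_apply, T_mul_apply, T_mul_apply, sub_neg_eq_add]
    rw [hlhs, Finset.mul_sum]
    have hterm : ∀ m ∈ range M,
        ((T 1 - T (-1)) * ((c (m+1)).toNat • gauss (m+1)) : LaurentPolynomial ℤ).coeff d
        = c ((m:ℤ)+1) * ((if ((m:ℤ)+1 = d) then 1 else 0) - (if (-((m:ℤ)+1) = d) then 1 else 0)) := by
      intro m _
      have hnn : ((c ((m:ℤ)+1)).toNat : ℤ) = c ((m:ℤ)+1) := Int.toNat_of_nonneg (hcnn _ (by omega))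
      rw [mul_smul_comm, key_gauss, AddMonoidAlgebra.coeff_smul, Finsupp.smul_apply, AddMonoidAlgebra.coeff_sub, Finsupp.sub_apply,
        LaurentPolynomial.T_apply, LaurentPolynomial.T_apply, nsmul_eq_mul, hnn]
      push_cast
      ring_nf
    rw [AddMonoidAlgebra.coeff_sum, Finsupp.finset_sum_apply, Finset.sum_congr rfl hterm]
    rcases lt_trichotomy d 0 with hd | hd | hd
    · -- d < 0
      have hLHS : f.coeff (d - 1) - f.coeff (d + 1) = -(c (-d)) := by
        have h1 : f.coeff (d - 1) = f.coeff (1 - d) := by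
          have := hsym (1 - d); rw [show -(1-d) = d - 1 by ring] at this; exact this
        have h2 : f.coeff (d + 1) = f.coeff (-d - 1) := by
          have := hsym (-d - 1); rw [show -(-d-1) = d + 1 by ring] at this; exact this
        simp only [hc]
        rw [h1, h2]
        ring_nf
      rw [hLHS]
      by_cases hdM : -d ≤ (M : ℤ)
      · rw [Finset.sum_eq_single ((-d).toNat - 1)]
        · rw [if_neg (by omega : ¬((((-d).toNat - 1 : ℕ):ℤ) + 1 = d)),
            if_pos (by omega : -((((-d).toNat - 1 : ℕ):ℤ) + 1) = d),
            show (((-d).toNat - 1 : ℕ):ℤ) + 1 = -d by omega]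
          ring
        · intro b _ hb
          have h1 : ¬((b:ℤ) + 1 = d) := by omega
          have h2 : ¬(-((b:ℤ) + 1) = d) := by omega
          rw [if_neg h1, if_neg h2]
          ring
        · intro hnot
          exfalso
          rw [Finset.mem_range] at hnot
          omega
      · have hz : ∀ m ∈ range M, c ((m:ℤ)+1) * ((if ((m:ℤ)+1 = d) then 1 else 0)
            - (if (-((m:ℤ)+1) = d) then 1 else 0)) = 0 := by
          intro m hm
          rw [Finset.mem_range] at hm
          rw [if_neg (by omega), if_neg (by omega)]
          ring
        rw [Finset.sum_eq_zero hz]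
        have : c (-d) = 0 := by
          simp only [hc]
          rw [hM (-d - 1) (by rw [abs_of_nonneg (by omega)]; omega),
            hM (-d + 1) (by rw [abs_of_nonneg (by omega)]; omega)]
          ring
        omega
    · -- d = 0
      subst hd
      rw [Finset.sum_eq_zero]
      · rw [show (0:ℤ)-1 = -1 by ring, show (0:ℤ)+1 = 1 by ring, hsym 1]
        ring
      · intro m _
        rw [if_neg (by omega), if_neg (by omega)]
        ring
    · -- d > 0
      have hLHS : f.coeff (d - 1) - f.coeff (d + 1) = c d := by simp only [hc]
      rw [hLHS]
      by_cases hdM : d ≤ (M : ℤ)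
      · rw [Finset.sum_eq_single (d.toNat - 1)]
        · rw [if_pos (by omega : ((d.toNat - 1 : ℕ):ℤ) + 1 = d), if_neg (by omega)]
          rw [show ((d.toNat - 1 : ℕ):ℤ) + 1 = d by omega]
          ring
        · intro b _ hb
          rw [if_neg (by omega), if_neg (by omega)]
          ring
        · intro hnot
          exfalso
          rw [Finset.mem_range] at hnot
          omega
      · rw [Finset.sum_eq_zero]
        · have h1 := hM (d - 1) (by rw [abs_of_nonneg (by omega)]; omega)
          have h2 := hM (d + 1) (by rw [abs_of_nonneg (by omega)]; omega)
          simp only [hc]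
          omega
        · intro m hm
          rw [Finset.mem_range] at hm
          rw [if_neg (by omega), if_neg (by omega)]
          ring
  rw [hfF]
  exact hclosure

lemma geom_inv {R : Type*} [CommRing R] (c : R) :
    (1 - PowerSeries.C c * PowerSeries.X) * PowerSeries.mk (fun k => c ^ k) = 1 := by
  ext k
  rcases k with _ | k
  · simp
  · rw [sub_mul, one_mul, map_sub, mul_assoc, PowerSeries.coeff_C_mul,
      PowerSeries.coeff_succ_X_mul]
    simp [pow_succ, mul_comm]

lemma T_prod {ι : Type*} (s : Finset ι) (c : ι → ℤ) :
    (∏ p ∈ s, (T (c p) : LaurentPolynomial ℤ)) = T (∑ p ∈ s, c p) := by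
  induction s using Finset.cons_induction with
  | empty => simp [T_zero]
  | cons p s hp ih => rw [Finset.prod_cons, Finset.sum_cons, ih, T_add]

open MvPolynomial

noncomputable def Eop (a b : ℕ) : Derivation ℚ (MvPolynomial (ℕ × ℕ) ℚ) (MvPolynomial (ℕ × ℕ) ℚ) :=
  mkDerivation ℚ fun p =>
    ((a - 1 - p.1 : ℕ) : ℚ) • X (p.1 + 1, p.2) + ((b - 1 - p.2 : ℕ) : ℚ) • X (p.1, p.2 + 1)

noncomputable def Fop : Derivation ℚ (MvPolynomial (ℕ × ℕ) ℚ) (MvPolynomial (ℕ × ℕ) ℚ) :=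
  mkDerivation ℚ fun p =>
    (p.1 : ℚ) • X (p.1 - 1, p.2) + (p.2 : ℚ) • X (p.1, p.2 - 1)

noncomputable def cH (a b : ℕ) (p : ℕ × ℕ) : ℚ :=
  (p.1 : ℚ) * ((a - 1 - (p.1 - 1) : ℕ) : ℚ) + (p.2 : ℚ) * ((b - 1 - (p.2 - 1) : ℕ) : ℚ)
    - ((a - 1 - p.1 : ℕ) : ℚ) * ((p.1 : ℚ) + 1) - ((b - 1 - p.2 : ℕ) : ℚ) * ((p.2 : ℚ) + 1)

noncomputable def Hop (a b : ℕ) : Derivation ℚ (MvPolynomial (ℕ × ℕ) ℚ) (MvPolynomial (ℕ × ℕ) ℚ) :=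
  mkDerivation ℚ fun p => cH a b p • X p

lemma bracket_EF (a b : ℕ) : ⁅Eop a b, Fop⁆ = Hop a b := by
  apply derivation_ext
  rintro ⟨i, j⟩
  rw [Derivation.commutator_apply]
  simp only [Eop, Fop, Hop, mkDerivation_X, map_add, Derivation.map_smul, mkDerivation_X]
  rcases i with _ | i <;> rcases j with _ | j <;>
    simp only [Nat.zero_sub, Nat.add_sub_cancel, Nat.cast_zero, Nat.cast_add, Nat.cast_one,
      zero_smul, add_zero, zero_add, smul_add, map_add, Derivation.map_smul, mkDerivation_X,
      Nat.sub_zero, cH, Nat.cast_ofNat] <;>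
    module


def gridP (a b : ℕ) : Finset (ℕ × ℕ) := Finset.range a ×ˢ Finset.range b

def wt (a b : ℕ) (p : ℕ × ℕ) : ℤ := (2 * (p.1 : ℤ) + 1 - (a : ℤ)) + (2 * (p.2 : ℤ) + 1 - (b : ℤ))

noncomputable def wsum (a b : ℕ) (μ : (ℕ × ℕ) →₀ ℕ) : ℤ :=
  ∑ p ∈ gridP a b, (μ p : ℤ) * wt a b p

noncomputable def Sd (a b n : ℕ) (d : ℤ) : Finset ((ℕ × ℕ) →₀ ℕ) :=
  (Finset.finsuppAntidiag (gridP a b) n).filter (fun μ => wsum a b μ = d)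

noncomputable def Usp (a b n : ℕ) (d : ℤ) : Submodule ℚ (MvPolynomial (ℕ × ℕ) ℚ) :=
  Submodule.span ℚ (((Sd a b n d).image (fun μ => monomial μ (1 : ℚ))) : Set (MvPolynomial (ℕ × ℕ) ℚ))

lemma mem_gridP {a b : ℕ} {p : ℕ × ℕ} : p ∈ gridP a b ↔ p.1 < a ∧ p.2 < b := by
  simp [gridP, Finset.mem_product]

lemma cast_sub_helper (i a : ℕ) (h : i < a) : ((a - 1 - i : ℕ) : ℚ) = (a : ℚ) - 1 - i := by
  rw [Nat.cast_sub (by omega), Nat.cast_sub (by omega)]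
  push_cast
  ring

lemma cast_mul_helper (i a : ℕ) (h : i < a) :
    (i : ℚ) * ((a - 1 - (i - 1) : ℕ) : ℚ) = (i : ℚ) * ((a : ℚ) - i) := by
  rcases i with _ | i
  · simp
  · rw [Nat.add_sub_cancel, Nat.cast_sub (by omega), Nat.cast_sub (by omega)]
    push_cast
    ring

lemma cH_eq_wt (a b : ℕ) (p : ℕ × ℕ) (hp : p ∈ gridP a b) : cH a b p = (wt a b p : ℚ) := by
  rw [mem_gridP] at hp
  obtain ⟨h1, h2⟩ := hp
  rcases p with ⟨i, j⟩
  rw [cH, wt]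
  dsimp only
  rw [cast_mul_helper i a h1, cast_mul_helper j b h2,
    cast_sub_helper i a h1, cast_sub_helper j b h2]
  push_cast
  ring

lemma smul_X_monomial (s : (ℕ × ℕ) →₀ ℕ) (k c : ℚ) (q : ℕ × ℕ) :
    (monomial s k : MvPolynomial (ℕ × ℕ) ℚ) • (c • (X q : MvPolynomial (ℕ × ℕ) ℚ))
      = (k * c) • monomial (s + Finsupp.single q 1) (1 : ℚ) := by
  rw [smul_eq_mul, mul_smul_comm, X, monomial_mul, mul_one,
    show (monomial (s + Finsupp.single q 1) k : MvPolynomial (ℕ × ℕ) ℚ)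
      = k • monomial (s + Finsupp.single q 1) (1:ℚ) from by
        rw [smul_monomial, smul_eq_mul, mul_one],
    smul_smul, mul_comm c k]

lemma H_monomial (a b n : ℕ) (μ : (ℕ × ℕ) →₀ ℕ)
    (hμ : μ ∈ Finset.finsuppAntidiag (gridP a b) n) :
    Hop a b (monomial μ 1) = ((wsum a b μ : ℚ)) • monomial μ 1 := by
  obtain ⟨hsum, hsupp⟩ := Finset.mem_finsuppAntidiag.mp hμ
  rw [Hop, mkDerivation_monomial, one_smul, Finsupp.sum]
  have hterm : ∀ p ∈ μ.support,
      (monomial (μ - Finsupp.single p 1) ((μ p : ℚ)) : MvPolynomial (ℕ × ℕ) ℚ)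
          • (cH a b p • (X p : MvPolynomial (ℕ × ℕ) ℚ))
        = ((μ p : ℚ) * (wt a b p : ℚ)) • monomial μ 1 := by
    intro p hp
    have hle : Finsupp.single p 1 ≤ μ := by
      rw [Finsupp.single_le_iff]
      exact Nat.one_le_iff_ne_zero.mpr (Finsupp.mem_support_iff.mp hp)
    rw [smul_X_monomial, tsub_add_cancel_of_le hle, cH_eq_wt a b p (hsupp hp)]
  rw [Finset.sum_congr rfl hterm, ← Finset.sum_smul]
  congr 1
  rw [wsum]
  push_cast
  exact Finset.sum_subset hsupp
    (fun x _ hnx => by simp [Finsupp.notMem_support_iff.mp hnx])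

lemma move_mem (a b n : ℕ) (μ : (ℕ × ℕ) →₀ ℕ)
    (hμ : μ ∈ Finset.finsuppAntidiag (gridP a b) n)
    (p q : ℕ × ℕ) (hp : p ∈ μ.support) (hq : q ∈ gridP a b) :
    (μ - Finsupp.single p 1 + Finsupp.single q 1) ∈ Finset.finsuppAntidiag (gridP a b) n
    ∧ wsum a b (μ - Finsupp.single p 1 + Finsupp.single q 1)
        = wsum a b μ - wt a b p + wt a b q := by
  obtain ⟨hsum, hsupp⟩ := Finset.mem_finsuppAntidiag.mp hμ
  have hpin : p ∈ gridP a b := hsupp hp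
  have hμp : 1 ≤ μ p := Nat.one_le_iff_ne_zero.mpr (Finsupp.mem_support_iff.mp hp)
  set ν := μ - Finsupp.single p 1 + Finsupp.single q 1 with hν
  have key : ∀ x, (ν x : ℤ)
      = (μ x : ℤ) - (if p = x then 1 else 0) + (if q = x then 1 else 0) := by
    intro x
    rw [hν, Finsupp.add_apply, Finsupp.tsub_apply, Finsupp.single_apply, Finsupp.single_apply]
    rcases eq_or_ne p x with h | h
    · subst h
      simp only [if_pos rfl]
      split_ifs <;> push_cast <;> omega
    · rw [if_neg h, if_neg h]
      split_ifs <;> push_cast <;> omega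
  constructor
  · rw [Finset.mem_finsuppAntidiag]
    constructor
    · -- sum equals n
      have hz : (∑ x ∈ gridP a b, (ν x : ℤ)) = n := by
        rw [Finset.sum_congr rfl (fun x _ => key x), Finset.sum_add_distrib,
          Finset.sum_sub_distrib, Finset.sum_ite_eq (gridP a b) p (fun _ => (1:ℤ)),
          Finset.sum_ite_eq (gridP a b) q (fun _ => (1:ℤ)), if_pos hpin, if_pos hq]
        have : (∑ x ∈ gridP a b, (μ x : ℤ)) = n := by
          rw [← Nat.cast_sum]
          exact_mod_cast congrArg (Nat.cast : ℕ → ℤ) hsum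
        rw [this]
        ring
      have : ((∑ x ∈ gridP a b, ν x : ℕ) : ℤ) = (n : ℤ) := by
        rw [Nat.cast_sum]
        exact hz
      exact_mod_cast this
    · -- support
      intro x hx
      rcases Finset.mem_union.mp (Finsupp.support_add hx) with h | h
      · exact hsupp (Finsupp.support_tsub h)
      · have := Finsupp.support_single_subset h
        rw [Finset.mem_singleton] at this
        rwa [this]
  · rw [wsum, wsum,
      Finset.sum_congr rfl (fun x _ => by rw [key x, add_mul, sub_mul] :
        ∀ x ∈ gridP a b, (ν x : ℤ) * wt a b x
          = (μ x : ℤ) * wt a b x - (if p = x then 1 else 0) * wt a b x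
            + (if q = x then 1 else 0) * wt a b x),
      Finset.sum_add_distrib, Finset.sum_sub_distrib]
    have h1 : ∑ x ∈ gridP a b, (if p = x then 1 else 0 : ℤ) * wt a b x = wt a b p := by
      rw [Finset.sum_congr rfl (fun x _ => by rw [ite_mul, one_mul, zero_mul]),
        Finset.sum_ite_eq (gridP a b) p (fun x => wt a b x), if_pos hpin]
    have h2 : ∑ x ∈ gridP a b, (if q = x then 1 else 0 : ℤ) * wt a b x = wt a b q := by
      rw [Finset.sum_congr rfl (fun x _ => by rw [ite_mul, one_mul, zero_mul]),
        Finset.sum_ite_eq (gridP a b) q (fun x => wt a b x), if_pos hq]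
    rw [h1, h2]

lemma mono_mem_U (a b n : ℕ) (d : ℤ) (μ : (ℕ × ℕ) →₀ ℕ) (hμ : μ ∈ Sd a b n d) :
    monomial μ (1 : ℚ) ∈ Usp a b n d :=
  Submodule.subset_span (Finset.mem_coe.mpr (Finset.mem_image_of_mem _ hμ))

lemma E_monomial_mem (a b n : ℕ) (d : ℤ) (μ : (ℕ × ℕ) →₀ ℕ) (hμ : μ ∈ Sd a b n d) :
    Eop a b (monomial μ 1) ∈ Usp a b n (d + 2) := by
  obtain ⟨hμ', hw⟩ := Finset.mem_filter.mp hμ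
  rw [Eop, mkDerivation_monomial, one_smul, Finsupp.sum]
  apply Submodule.sum_mem
  intro p hp
  rw [smul_add]
  have hpin : p ∈ gridP a b := (Finset.mem_finsuppAntidiag.mp hμ').2 hp
  rw [mem_gridP] at hpin
  apply add_mem
  · by_cases h : (a - 1 - p.1 : ℕ) = 0
    · rw [h]
      simp
    · rw [smul_X_monomial]
      apply Submodule.smul_mem
      have hq : (p.1 + 1, p.2) ∈ gridP a b := by
        rw [mem_gridP]
        exact ⟨by omega, hpin.2⟩
      obtain ⟨h1, h2⟩ := move_mem a b n μ hμ' p (p.1 + 1, p.2) hp hq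
      apply mono_mem_U
      rw [Sd, Finset.mem_filter]
      refine ⟨h1, ?_⟩
      rw [h2, hw, wt, wt]
      push_cast
      ring
  · by_cases h : (b - 1 - p.2 : ℕ) = 0
    · rw [h]
      simp
    · rw [smul_X_monomial]
      apply Submodule.smul_mem
      have hq : (p.1, p.2 + 1) ∈ gridP a b := by
        rw [mem_gridP]
        exact ⟨hpin.1, by omega⟩
      obtain ⟨h1, h2⟩ := move_mem a b n μ hμ' p (p.1, p.2 + 1) hp hq
      apply mono_mem_U
      rw [Sd, Finset.mem_filter]
      refine ⟨h1, ?_⟩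
      rw [h2, hw, wt, wt]
      push_cast
      ring

lemma F_monomial_mem (a b n : ℕ) (d : ℤ) (μ : (ℕ × ℕ) →₀ ℕ) (hμ : μ ∈ Sd a b n d) :
    Fop (monomial μ 1) ∈ Usp a b n (d - 2) := by
  obtain ⟨hμ', hw⟩ := Finset.mem_filter.mp hμ
  rw [Fop, mkDerivation_monomial, one_smul, Finsupp.sum]
  apply Submodule.sum_mem
  intro p hp
  rw [smul_add]
  have hpin : p ∈ gridP a b := (Finset.mem_finsuppAntidiag.mp hμ').2 hp
  rw [mem_gridP] at hpin
  apply add_mem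
  · by_cases h : p.1 = 0
    · rw [h]
      simp
    · rw [smul_X_monomial]
      apply Submodule.smul_mem
      have hq : (p.1 - 1, p.2) ∈ gridP a b := by
        rw [mem_gridP]
        exact ⟨by omega, hpin.2⟩
      obtain ⟨h1, h2⟩ := move_mem a b n μ hμ' p (p.1 - 1, p.2) hp hq
      apply mono_mem_U
      rw [Sd, Finset.mem_filter]
      refine ⟨h1, ?_⟩
      rw [h2, hw, wt, wt]
      have hc : ((p.1 - 1 : ℕ) : ℤ) = (p.1 : ℤ) - 1 := by omega
      rw [hc]
      push_cast
      ring
  · by_cases h : p.2 = 0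
    · rw [h]
      simp
    · rw [smul_X_monomial]
      apply Submodule.smul_mem
      have hq : (p.1, p.2 - 1) ∈ gridP a b := by
        rw [mem_gridP]
        exact ⟨hpin.1, by omega⟩
      obtain ⟨h1, h2⟩ := move_mem a b n μ hμ' p (p.1, p.2 - 1) hp hq
      apply mono_mem_U
      rw [Sd, Finset.mem_filter]
      refine ⟨h1, ?_⟩
      rw [h2, hw, wt, wt]
      have hc : ((p.2 - 1 : ℕ) : ℤ) = (p.2 : ℤ) - 1 := by omega
      rw [hc]
      push_cast
      ring

lemma U_E (a b n : ℕ) (d : ℤ) : ∀ v ∈ Usp a b n d, Eop a b v ∈ Usp a b n (d + 2) := by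
  intro v hv
  induction hv using Submodule.span_induction with
  | mem x hx =>
    obtain ⟨μ, hμ, rfl⟩ := Finset.mem_image.mp hx
    exact E_monomial_mem a b n d μ hμ
  | zero => rw [map_zero]; exact Submodule.zero_mem _
  | add x y _ _ hx hy => rw [map_add]; exact Submodule.add_mem _ hx hy
  | smul c x _ hx => rw [Derivation.map_smul]; exact Submodule.smul_mem _ _ hx

lemma U_F (a b n : ℕ) (d : ℤ) : ∀ v ∈ Usp a b n d, Fop v ∈ Usp a b n (d - 2) := by
  intro v hv
  induction hv using Submodule.span_induction with
  | mem x hx =>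
    obtain ⟨μ, hμ, rfl⟩ := Finset.mem_image.mp hx
    exact F_monomial_mem a b n d μ hμ
  | zero => rw [map_zero]; exact Submodule.zero_mem _
  | add x y _ _ hx hy => rw [map_add]; exact Submodule.add_mem _ hx hy
  | smul c x _ hx => rw [Derivation.map_smul]; exact Submodule.smul_mem _ _ hx

lemma U_H (a b n : ℕ) (d : ℤ) :
    ∀ v ∈ Usp a b n d, Eop a b (Fop v) - Fop (Eop a b v) = (d : ℚ) • v := by
  intro v hv
  induction hv using Submodule.span_induction with
  | mem x hx =>
    obtain ⟨μ, hμ, rfl⟩ := Finset.mem_image.mp hx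
    have h1 : Eop a b (Fop (monomial μ 1)) - Fop (Eop a b (monomial μ 1))
        = Hop a b (monomial μ 1) := by
      rw [← bracket_EF a b, Derivation.commutator_apply]
    obtain ⟨hμ', hw⟩ := Finset.mem_filter.mp hμ
    rw [h1, H_monomial a b n μ hμ', hw]
  | zero => simp
  | add x y _ _ hx hy =>
    rw [map_add, map_add, map_add, map_add, smul_add]
    rw [← hx, ← hy]
    abel
  | smul c x _ hx =>
    rw [Derivation.map_smul, Derivation.map_smul, Derivation.map_smul, Derivation.map_smul,
      ← smul_sub, hx, smul_smul, smul_smul, mul_comm]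

lemma U_top (a b n : ℕ) (d : ℤ) (hd : (n : ℤ) * (a + b) < d) : Usp a b n d = ⊥ := by
  rw [Usp]
  convert Submodule.span_empty
  rw [Finset.coe_eq_empty, Finset.image_eq_empty, Sd, Finset.filter_eq_empty_iff]
  intro μ hμ
  obtain ⟨hsum, hsupp⟩ := Finset.mem_finsuppAntidiag.mp hμ
  intro hw
  have hbound : wsum a b μ ≤ (n : ℤ) * (a + b) := by
    rw [wsum]
    calc ∑ p ∈ gridP a b, (μ p : ℤ) * wt a b p
        ≤ ∑ p ∈ gridP a b, (μ p : ℤ) * ((a : ℤ) + b) := by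
          apply Finset.sum_le_sum
          intro p hpin
          rw [mem_gridP] at hpin
          apply mul_le_mul_of_nonneg_left _ (by positivity)
          rw [wt]
          omega
      _ = (n : ℤ) * (a + b) := by
          rw [← Finset.sum_mul]
          congr 1
          rw [← Nat.cast_sum]
          exact_mod_cast congrArg (Nat.cast : ℕ → ℤ) hsum
  omega


lemma sl2_vanish {M : Type*} [AddCommGroup M] [Module ℚ M] (E F : M →ₗ[ℚ] M)
    (U : ℤ → Submodule ℚ M)
    (hE : ∀ d : ℤ, ∀ v ∈ U d, E v ∈ U (d + 2))
    (hH : ∀ d : ℤ, ∀ v ∈ U d, E (F v) - F (E v) = (d : ℚ) • v)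
    (B : ℤ) (htop : ∀ d : ℤ, B < d → U d = ⊥)
    (d : ℤ) (hd : 0 < d) (v : M) (hv : v ∈ U d) (hFv : F v = 0) : v = 0 := by
  have hmemk : ∀ k : ℕ, (E ^ k) v ∈ U (d + 2 * k) := by
    intro k
    induction k with
    | zero => simpa using hv
    | succ k ih =>
      have h := hE (d + 2 * k) _ ih
      rw [pow_succ', Module.End.mul_apply]
      have e : d + 2 * ((k : ℤ) + 1) = d + 2 * k + 2 := by ring
      push_cast
      rw [e]
      exact h
  have hFk : ∀ k : ℕ, F ((E ^ (k + 1)) v) = (-((k : ℚ) + 1) * ((d : ℚ) + k)) • (E ^ k) v := by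
    intro k
    induction k with
    | zero =>
      have h0 := hH d v hv
      rw [hFv, map_zero, zero_sub, neg_eq_iff_eq_neg] at h0
      simp only [zero_add, pow_one, pow_zero, Module.End.one_apply, Nat.cast_zero]
      rw [h0, ← neg_smul]
      norm_num
    | succ k ih =>
      have hu := hmemk (k + 1)
      have h1 := hH (d + 2 * (k + 1)) _ hu
      have h2 : F ((E ^ (k + 1)) v) = (-((k : ℚ) + 1) * ((d : ℚ) + k)) • (E ^ k) v := ih
      have hEFu : E (F ((E ^ (k + 1)) v)) = (-((k : ℚ) + 1) * ((d : ℚ) + k)) • (E ^ (k + 1)) v := by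
        rw [h2, map_smul, ← Module.End.mul_apply, ← pow_succ']
      have hEu : E ((E ^ (k + 1)) v) = (E ^ (k + 2)) v := by
        rw [← Module.End.mul_apply, ← pow_succ']
      push_cast at h1
      rw [hEu, hEFu] at h1
      have : F ((E ^ (k + 2)) v)
          = (-((k : ℚ) + 1) * ((d : ℚ) + k)) • (E ^ (k + 1)) v
            - ((d : ℚ) + 2 * ((k : ℚ) + 1)) • (E ^ (k + 1)) v := by
        rw [← h1]
        abel
      rw [this, ← sub_smul]
      congr 1
      push_cast
      ring
  set k0 : ℕ := (B - d).toNat + 1 with hk0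
  have hzero : (E ^ k0) v = 0 := by
    have h := hmemk k0
    rw [htop (d + 2 * k0) (by omega)] at h
    simpa using h
  have hstep : ∀ k : ℕ, (E ^ (k + 1)) v = 0 → (E ^ k) v = 0 := by
    intro k hk
    have := hFk k
    rw [hk, map_zero] at this
    have hne : (-((k : ℚ) + 1) * ((d : ℚ) + k)) ≠ 0 := by
      have h1 : (0 : ℚ) < (k : ℚ) + 1 := by positivity
      have h2 : (0 : ℚ) < (d : ℚ) + k := by
        have : (1 : ℚ) ≤ (d : ℚ) := by exact_mod_cast hd
        positivity
      intro h
      rw [neg_mul, neg_eq_zero, mul_eq_zero] at h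
      rcases h with h | h <;> linarith
    exact (smul_eq_zero.mp this.symm).resolve_left hne
  have hall : ∀ j : ℕ, (E ^ (k0 - j)) v = 0 := by
    intro j
    induction j with
    | zero => simpa using hzero
    | succ j ih =>
      rcases Nat.lt_or_ge j k0 with h | h
      · apply hstep
        rwa [show k0 - (j + 1) + 1 = k0 - j by omega]
      · rwa [show k0 - (j+1) = k0 - j by omega]
  have := hall k0
  simpa using this


lemma finrank_U (a b n : ℕ) (d : ℤ) :
    Module.finrank ℚ (Usp a b n d) = (Sd a b n d).card := by
  have hind : LinearIndependent ℚ
      ((↑) : ((Sd a b n d).image (fun μ => monomial μ (1 : ℚ)) : Finset (MvPolynomial (ℕ × ℕ) ℚ))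
        → MvPolynomial (ℕ × ℕ) ℚ) := by
    have hbig : LinearIndependent ℚ
        ((↑) : Set.range (fun μ : (ℕ × ℕ) →₀ ℕ => monomial μ (1 : ℚ)) → MvPolynomial (ℕ × ℕ) ℚ) := by
      have := (basisMonomials (ℕ × ℕ) ℚ).linearIndependent
      rw [coe_basisMonomials] at this
      exact LinearIndependent.linearIndepOn_id this
    apply LinearIndepOn.mono (v := id) hbig
    intro x hx
    obtain ⟨μ, _, rfl⟩ := Finset.mem_image.mp (Finset.mem_coe.mp hx)
    exact Set.mem_range_self μ
  have h1 : Module.finrank ℚ (Usp a b n d)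
      = ((Sd a b n d).image (fun μ => monomial μ (1 : ℚ))).card := by
    rw [Usp, finrank_span_finset_eq_card hind]
  rw [h1, Finset.card_image_of_injective _ (monomial_left_injective (one_ne_zero))]

lemma card_Sd_mono (a b n : ℕ) (d : ℤ) (hd : 0 ≤ d) :
    (Sd a b n (d + 2)).card ≤ (Sd a b n d).card := by
  have hrestrict : ∀ x ∈ Usp a b n (d + 2), Fop.toLinearMap x ∈ Usp a b n d := by
    intro x hx
    have := U_F a b n (d + 2) x hx
    rwa [show d + 2 - 2 = d by ring] at this
  set φ : Usp a b n (d + 2) →ₗ[ℚ] Usp a b n d := Fop.toLinearMap.restrict hrestrict with hφ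
  have hinj : Function.Injective φ := by
    rw [← LinearMap.ker_eq_bot, LinearMap.ker_eq_bot']
    intro v hv
    have hFv : Fop (v : MvPolynomial (ℕ × ℕ) ℚ) = 0 := by
      have := congrArg (Subtype.val) hv
      simpa [hφ, LinearMap.restrict_apply] using this
    have hv0 : (v : MvPolynomial (ℕ × ℕ) ℚ) = 0 := by
      apply sl2_vanish (Eop a b).toLinearMap Fop.toLinearMap (Usp a b n)
        (U_E a b n) (U_H a b n) ((n : ℤ) * (a + b)) (U_top a b n) (d + 2) (by omega)
        _ v.2 hFv
    exact Subtype.ext hv0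
  haveI : Module.Finite ℚ (Usp a b n d) := by
    unfold Usp
    exact Module.Finite.span_finset ℚ _
  have := LinearMap.finrank_le_finrank_of_injective hinj
  rwa [finrank_U, finrank_U] at this

def flipP (a b : ℕ) (p : ℕ × ℕ) : ℕ × ℕ := (a - 1 - p.1, b - 1 - p.2)

noncomputable def flipF (a b : ℕ) (μ : (ℕ × ℕ) →₀ ℕ) : (ℕ × ℕ) →₀ ℕ :=
  ∑ p ∈ gridP a b, Finsupp.single (flipP a b p) (μ p)

lemma flipP_mem (a b : ℕ) (ha : 1 ≤ a) (hb : 1 ≤ b) (q : ℕ × ℕ) : flipP a b q ∈ gridP a b := by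
  rw [mem_gridP, flipP]
  constructor <;> [omega; omega]

lemma flipP_flipP (a b : ℕ) {q : ℕ × ℕ} (hq : q ∈ gridP a b) : flipP a b (flipP a b q) = q := by
  rw [mem_gridP] at hq
  rw [flipP, flipP]
  ext <;> simp <;> omega

lemma flipF_apply (a b : ℕ) (ha : 1 ≤ a) (hb : 1 ≤ b) (μ : (ℕ × ℕ) →₀ ℕ) (q : ℕ × ℕ) :
    flipF a b μ q = if q ∈ gridP a b then μ (flipP a b q) else 0 := by
  rw [flipF, Finsupp.finset_sum_apply]
  have h1 : ∀ p, (Finsupp.single (flipP a b p) (μ p)) q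
      = if flipP a b p = q then μ p else 0 := fun p => Finsupp.single_apply
  rw [Finset.sum_congr rfl (fun p _ => h1 p)]
  by_cases hq : q ∈ gridP a b
  · rw [if_pos hq, Finset.sum_eq_single (flipP a b q)]
    · rw [if_pos (flipP_flipP a b hq)]
    · intro p hp hne
      rw [if_neg]
      intro h
      exact hne (by rw [← h, flipP_flipP a b (hp : p ∈ gridP a b)])
    · intro h
      exact absurd (flipP_mem a b ha hb q) h
  · rw [if_neg hq, Finset.sum_eq_zero]
    intro p hp
    rw [if_neg]
    intro h
    exact hq (h ▸ flipP_mem a b ha hb p)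

lemma wt_flipP (a b : ℕ) {p : ℕ × ℕ} (hp : p ∈ gridP a b) :
    wt a b (flipP a b p) = -(wt a b p) := by
  rw [mem_gridP] at hp
  rw [wt, wt, flipP]
  simp only
  omega

set_option maxHeartbeats 1000000 in
lemma card_Sd_symm (a b n : ℕ) (ha : 1 ≤ a) (hb : 1 ≤ b) (d : ℤ) :
    (Sd a b n (-d)).card = (Sd a b n d).card := by
  have main : ∀ e : ℤ, ∀ μ ∈ Sd a b n e, flipF a b μ ∈ Sd a b n (-e) := by
    intro e μ hμ
    rw [Sd, Finset.mem_filter] at hμ ⊢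
    obtain ⟨hμ', hw⟩ := hμ
    obtain ⟨hsum, hsupp⟩ := Finset.mem_finsuppAntidiag.mp hμ'
    have happ := flipF_apply a b ha hb μ
    constructor
    · rw [Finset.mem_finsuppAntidiag]
      constructor
      · rw [← hsum]
        refine Finset.sum_nbij' (fun q => flipP a b q) (fun q => flipP a b q) ?_ ?_ ?_ ?_ ?_
        · intro q hq; exact flipP_mem a b ha hb q
        · intro q hq; exact flipP_mem a b ha hb q
        · intro q hq; exact flipP_flipP a b hq
        · intro q hq; exact flipP_flipP a b hq
        · intro q hq
          rw [happ q, if_pos hq]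
      · intro q hq
        rw [Finsupp.mem_support_iff, happ q] at hq
        by_contra h
        rw [if_neg h] at hq
        exact hq rfl
    · rw [← hw, wsum, wsum]
      rw [Finset.sum_congr rfl (fun q hq => by rw [happ q, if_pos hq] :
        ∀ q ∈ gridP a b, (flipF a b μ q : ℤ) * wt a b q = (μ (flipP a b q) : ℤ) * wt a b q)]
      rw [show -(∑ p ∈ gridP a b, (μ p : ℤ) * wt a b p)
          = ∑ p ∈ gridP a b, (μ p : ℤ) * -(wt a b p) from by
        rw [← Finset.sum_neg_distrib]; exact Finset.sum_congr rfl fun p _ => by ring]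
      refine Finset.sum_nbij' (fun q => flipP a b q) (fun q => flipP a b q) ?_ ?_ ?_ ?_ ?_
      · intro q hq; exact flipP_mem a b ha hb q
      · intro q hq; exact flipP_mem a b ha hb q
      · intro q hq; exact flipP_flipP a b hq
      · intro q hq; exact flipP_flipP a b hq
      · intro q hq
        rw [wt_flipP a b hq, neg_neg]
  have hsuppSd : ∀ e : ℤ, ∀ μ ∈ Sd a b n e, μ.support ⊆ gridP a b := by
    intro e μ hμ
    exact (Finset.mem_finsuppAntidiag.mp (Finset.mem_filter.mp hμ).1).2
  have hinv : ∀ μ : (ℕ × ℕ) →₀ ℕ, μ.support ⊆ gridP a b → flipF a b (flipF a b μ) = μ := by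
    intro μ hsupp
    apply Finsupp.ext
    intro q
    rw [flipF_apply a b ha hb]
    by_cases hq : q ∈ gridP a b
    · rw [if_pos hq, flipF_apply a b ha hb, if_pos (flipP_mem a b ha hb q), flipP_flipP a b hq]
    · rw [if_neg hq]
      symm
      rw [← Finsupp.notMem_support_iff]
      intro h
      exact hq (hsupp h)
  apply le_antisymm
  · apply Finset.card_le_card_of_injOn (fun μ => flipF a b μ)
      (fun μ hμ => by have h := main (-d) μ hμ; rwa [neg_neg] at h)
    intro μ1 h1 μ2 h2 heq
    have := congrArg (flipF a b) heq
    rwa [hinv μ1 (hsuppSd _ μ1 h1), hinv μ2 (hsuppSd _ μ2 h2)] at this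
  · apply Finset.card_le_card_of_injOn (fun μ => flipF a b μ) (fun μ hμ => main d μ hμ)
    intro μ1 h1 μ2 h2 heq
    have := congrArg (flipF a b) heq
    rwa [hinv μ1 (hsuppSd _ μ1 h1), hinv μ2 (hsuppSd _ μ2 h2)] at this


lemma coeff_g (a b n : ℕ) (g : PowerSeries (LaurentPolynomial ℤ))
    (hg : g * ∏ p ∈ Finset.range a ×ˢ Finset.range b,
      (1 - PowerSeries.C
            (T ((2 * (p.1 : ℤ) + 1 - (a : ℤ)) + (2 * (p.2 : ℤ) + 1 - (b : ℤ))))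
          * PowerSeries.X) = 1) :
    PowerSeries.coeff n g
      = ∑ μ ∈ Finset.finsuppAntidiag (gridP a b) n, T (wsum a b μ) := by
  have hG : (∏ p ∈ gridP a b,
        (1 - PowerSeries.C (T (wt a b p)) * PowerSeries.X))
      * (∏ p ∈ gridP a b, PowerSeries.mk fun k => (T (wt a b p) : LaurentPolynomial ℤ) ^ k)
        = 1 := by
    rw [← Finset.prod_mul_distrib,
      Finset.prod_congr rfl (fun p _ => geom_inv (T (wt a b p)))]
    exact Finset.prod_const_one
  have h2 : g * ∏ p ∈ gridP a b,
      (1 - PowerSeries.C (T (wt a b p)) * PowerSeries.X) = 1 := hg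
  have hgG : g = ∏ p ∈ gridP a b,
      PowerSeries.mk fun k => (T (wt a b p) : LaurentPolynomial ℤ) ^ k := by
    calc g = g * ((∏ p ∈ gridP a b,
          (1 - PowerSeries.C (T (wt a b p)) * PowerSeries.X))
        * (∏ p ∈ gridP a b, PowerSeries.mk fun k => (T (wt a b p) : LaurentPolynomial ℤ) ^ k)) := by
          rw [hG, mul_one]
    _ = (g * ∏ p ∈ gridP a b,
          (1 - PowerSeries.C (T (wt a b p)) * PowerSeries.X))
        * (∏ p ∈ gridP a b, PowerSeries.mk fun k => (T (wt a b p) : LaurentPolynomial ℤ) ^ k) := by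
          ring
    _ = _ := by rw [h2, one_mul]
  rw [hgG, PowerSeries.coeff_prod]
  apply Finset.sum_congr rfl
  intro μ hμ
  rw [Finset.prod_congr rfl
      (fun p _ => by rw [PowerSeries.coeff_mk, LaurentPolynomial.T_pow] :
        ∀ p ∈ gridP a b, PowerSeries.coeff (μ p)
            (PowerSeries.mk fun k => (T (wt a b p) : LaurentPolynomial ℤ) ^ k)
          = T ((μ p : ℤ) * wt a b p)),
    T_prod, wsum]

lemma coeff_sum_T (a b n : ℕ) (d : ℤ) :
    (∑ μ ∈ Finset.finsuppAntidiag (gridP a b) n, (T (wsum a b μ) : LaurentPolynomial ℤ)).coeff d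
      = ((Sd a b n d).card : ℤ) := by
  rw [AddMonoidAlgebra.coeff_sum, Finsupp.finset_sum_apply,
    Finset.sum_congr rfl (fun μ _ => LaurentPolynomial.T_apply d (wsum a b μ)),
    Finset.sum_boole, Sd]

/-- Lemma 2.18, symmetric-power case.  For `a, b ≥ 1`, with weights
`w(i,j) = (2i+1-a) + (2j+1-b)` for `0 ≤ i < a`, `0 ≤ j < b`, every coefficient of `z^n`
of the inverse power series `∏_{i,j} (1 - t^{w(i,j)} z)⁻¹ ∈ ℤ[t,t⁻¹]⟦z⟧` (i.e. of any
`g` with `g · ∏_{i,j} (1 - t^{w(i,j)} z) = 1`) is of Lefschetz type. -/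
theorem symmetric_power_character_lefschetz (a b : ℕ) (ha : 1 ≤ a) (hb : 1 ≤ b)
    (n : ℕ) (g : PowerSeries (LaurentPolynomial ℤ))
    (hg : g * ∏ p ∈ Finset.range a ×ˢ Finset.range b,
      (1 - PowerSeries.C
            (T ((2 * (p.1 : ℤ) + 1 - (a : ℤ)) + (2 * (p.2 : ℤ) + 1 - (b : ℤ))))
          * PowerSeries.X) = 1) :
    IsLefschetz (PowerSeries.coeff n g) := by
  have hco := coeff_g a b n g hg
  apply isLefschetz_of_symm_mono
  · intro d
    rw [hco, coeff_sum_T, coeff_sum_T]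
    exact_mod_cast congrArg (Nat.cast : ℕ → ℤ) (card_Sd_symm a b n ha hb d)
  · intro d hd
    rw [hco, coeff_sum_T, coeff_sum_T]
    exact_mod_cast card_Sd_mono a b n d hd
end

section
/- Lemma 2.25 of the paper (composite quantum dilogarithm adjoint action, Ad_{Ψ_t(z^{−v})} ∘ Ad_{Ψ_t(z^v)}(z^p) = z^{p+nv}), in finite ring form: let R be a (not necessarily commutative) ring, let t ∈ R be a central unit, let x ∈ R be a unit, let z ∈ R, and let n be a natural number such that z·x = t^{−2n}·x·z. Then z · ∏_{k=1}^{n} (1 + t^{2k−1} x) = t^{−n²} · x^n · z · ∏_{k=1}^{n} (1 + t^{−(2k−1)} x^{−1}) in R. (The factors in each product pairwise commute, so the products are unambiguous.) -/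
private lemma cdla_prod {R : Type*} [Ring R] (t x : Rˣ)
    (ht : ∀ r : R, Commute (t : R) r) (n : ℕ) :
    ((List.range n).map
          (fun k : ℕ => 1 + ((t ^ (2 * (k : ℤ) + 1) : Rˣ) : R) * (x : R))).prod
      = ((t ^ ((n : ℤ) ^ 2) : Rˣ) : R) * (x : R) ^ n *
        ((List.range n).map
          (fun k : ℕ => 1 + ((t ^ (-(2 * (k : ℤ) + 1)) : Rˣ) : R) * ((x⁻¹ : Rˣ) : R))).prod := by
  have key : ∀ a : ℤ,
      ((t ^ a : Rˣ) : R) * (x : R) * (((t ^ (-a) : Rˣ) : R) * ((x⁻¹ : Rˣ) : R)) = 1 := by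
    intro a
    have h1 : ((x : R)) * ((t ^ (-a) : Rˣ) : R) = ((t ^ (-a) : Rˣ) : R) * (x : R) :=
      ((ht (x : R)).units_zpow_left (-a)).eq.symm
    calc ((t ^ a : Rˣ) : R) * (x : R) * (((t ^ (-a) : Rˣ) : R) * ((x⁻¹ : Rˣ) : R))
        = ((t ^ a : Rˣ) : R) * ((x : R) * ((t ^ (-a) : Rˣ) : R)) * ((x⁻¹ : Rˣ) : R) := by
          simp [mul_assoc]
      _ = ((t ^ a : Rˣ) : R) * (((t ^ (-a) : Rˣ) : R) * (x : R)) * ((x⁻¹ : Rˣ) : R) := by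
          rw [h1]
      _ = ((t ^ a : Rˣ) : R) * ((t ^ (-a) : Rˣ) : R) * ((x : R) * ((x⁻¹ : Rˣ) : R)) := by
          simp [mul_assoc]
      _ = 1 := by
          rw [← Units.val_mul, ← zpow_add, add_neg_cancel, zpow_zero, Units.val_one,
            Units.mul_inv, one_mul]
  induction n with
  | zero => simp
  | succ n ih =>
    simp only [List.range_succ, List.map_append, List.prod_append,
      List.map_singleton, List.prod_singleton]
    rw [ih]
    set Q := ((List.range n).map
        (fun k : ℕ => 1 + ((t ^ (-(2 * (k : ℤ) + 1)) : Rˣ) : R) * ((x⁻¹ : Rˣ) : R))).prod with hQdef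
    have htQ : ∀ a : ℤ, Commute ((t ^ a : Rˣ) : R) Q :=
      fun a => Commute.list_prod_right _ _ (fun y _ => (ht y).units_zpow_left a)
    have hxQ : Commute ((x : R)) Q := by
      refine Commute.list_prod_right _ _ ?_
      intro y hy
      simp only [List.mem_map] at hy
      obtain ⟨k, -, rfl⟩ := hy
      exact (Commute.one_right _).add_right
        ((((ht (x : R)).units_zpow_left _).symm).mul_right
          ((Commute.refl (x : R)).units_inv_right))
    have hxiQ : Commute (((x⁻¹ : Rˣ) : R)) Q := by
      refine Commute.list_prod_right _ _ ?_
      intro y hy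
      simp only [List.mem_map] at hy
      obtain ⟨k, -, rfl⟩ := hy
      exact (Commute.one_right _).add_right
        ((((ht _).units_zpow_left _).symm).mul_right (Commute.refl _))
    have hc : Commute (1 + ((t ^ (2 * (n : ℤ) + 1) : Rˣ) : R) * (x : R)) Q :=
      (Commute.one_left Q).add_left ((htQ _).mul_left hxQ)
    have hc' : Commute (1 + ((t ^ (-(2 * (n : ℤ) + 1)) : Rˣ) : R) * ((x⁻¹ : Rˣ) : R)) Q :=
      (Commute.one_left Q).add_left ((htQ _).mul_left hxiQ)
    have hfac : ((t ^ (2 * (n : ℤ) + 1) : Rˣ) : R) * (x : R) *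
        (1 + ((t ^ (-(2 * (n : ℤ) + 1)) : Rˣ) : R) * ((x⁻¹ : Rˣ) : R))
        = 1 + ((t ^ (2 * (n : ℤ) + 1) : Rˣ) : R) * (x : R) := by
      rw [mul_add, mul_one, key (2 * (n : ℤ) + 1), add_comm]
    have hXA : (x : R) ^ n * ((t ^ (2 * (n : ℤ) + 1) : Rˣ) : R)
        = ((t ^ (2 * (n : ℤ) + 1) : Rˣ) : R) * (x : R) ^ n :=
      (((ht (x : R)).units_zpow_left _).pow_right n).eq.symm
    have hT2 : ((t ^ (((n : ℕ) + 1 : ℕ) : ℤ) ^ 2 : Rˣ) : R)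
        = ((t ^ ((n : ℤ) ^ 2) : Rˣ) : R) * ((t ^ (2 * (n : ℤ) + 1) : Rˣ) : R) := by
      rw [← Units.val_mul, ← zpow_add]
      norm_num
      congr 1
      push_cast
      ring
    rw [mul_assoc, hc.eq.symm, ← hfac, hT2, pow_succ (x : R) n]
    rw [mul_assoc (((t ^ (2 * (n : ℤ) + 1) : Rˣ) : R) * (x : R)), hc'.eq]
    simp only [← mul_assoc]
    rw [mul_assoc (((t ^ ((n : ℤ) ^ 2) : Rˣ) : R)), hXA]
    simp only [← mul_assoc]

/-- Lemma 2.25, composite quantum dilogarithm adjoint action, finite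
ring form.  Let `R` be a ring, `t ∈ R` a central unit, `x ∈ R` a unit, `z ∈ R`, and
`n : ℕ` with `z·x = t^{-2n}·x·z`.  Then
`z · ∏_{k=1}^n (1 + t^{2k-1} x) = t^{-n²} · xⁿ · z · ∏_{k=1}^n (1 + t^{-(2k-1)} x⁻¹)`.
(The factors in each product pairwise commute; they are multiplied in the order
`k = 1, …, n`.) -/
theorem composite_dilog_adjoint (R : Type*) [Ring R] (t : Rˣ)
    (ht : (t : R) ∈ Set.center R) (x : Rˣ) (z : R) (n : ℕ)
    (hcomm : z * (x : R) = ((t ^ (-(2 * (n : ℤ))) : Rˣ) : R) * (x : R) * z) :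
    z * ((List.range n).map
          (fun k => 1 + ((t ^ (2 * (k : ℤ) + 1) : Rˣ) : R) * (x : R))).prod
      = ((t ^ (-((n : ℤ) ^ 2)) : Rˣ) : R) * (x : R) ^ n * z *
        ((List.range n).map
          (fun k => 1 + ((t ^ (-(2 * (k : ℤ) + 1)) : Rˣ) : R) * ((x⁻¹ : Rˣ) : R))).prod := by
  have ht' : ∀ r : R, Commute (t : R) r := fun r =>
    ((Semigroup.mem_center_iff.mp ht) r).symm
  have hzx : ∀ m : ℕ, z * (x : R) ^ m
      = ((t ^ (-(2 * (n : ℤ)) * m) : Rˣ) : R) * (x : R) ^ m * z := by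
    intro m
    induction m with
    | zero => simp
    | succ m ihm =>
      have hXe : (x : R) ^ m * ((t ^ (-(2 * (n : ℤ))) : Rˣ) : R)
          = ((t ^ (-(2 * (n : ℤ))) : Rˣ) : R) * (x : R) ^ m :=
        (((ht' (x : R)).units_zpow_left _).pow_right m).eq.symm
      have he : ((t ^ (-(2 * (n : ℤ)) * (m + 1 : ℕ)) : Rˣ) : R)
          = ((t ^ (-(2 * (n : ℤ)) * m) : Rˣ) : R) * ((t ^ (-(2 * (n : ℤ))) : Rˣ) : R) := by
        rw [← Units.val_mul, ← zpow_add]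
        congr 1
        push_cast
        ring
      rw [pow_succ, ← mul_assoc, ihm, mul_assoc, mul_assoc, hcomm, he]
      simp only [← mul_assoc]
      rw [mul_assoc _ ((x : R) ^ m), hXe]
      simp only [← mul_assoc]
  have hcast : ∀ m : ℕ, ((List.range m : List ℤ)) = (List.range m).map (fun a : ℕ => (a : ℤ)) := by
    intro m
    show (List.range m).flatMap _ = _
    induction m with
    | zero => rfl
    | succ m ihm =>
        simp only [List.pure_def] at ihm
        simp only [List.range_succ, List.flatMap_append, List.flatMap_cons, List.flatMap_nil,
          List.append_nil, List.map_append, List.map_cons, List.map_nil, List.pure_def, ihm]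
  simp only [hcast, List.map_map, Function.comp_def]
  rw [cdla_prod t x ht' n]
  have hzT : z * ((t ^ ((n : ℤ) ^ 2) : Rˣ) : R) = ((t ^ ((n : ℤ) ^ 2) : Rˣ) : R) * z :=
    ((ht' z).units_zpow_left _).eq.symm
  simp only [← mul_assoc]
  rw [hzT, mul_assoc _ z, hzx n]
  have hcombine : ((t ^ ((n : ℤ) ^ 2) : Rˣ) : R) * ((t ^ (-(2 * (n : ℤ)) * n) : Rˣ) : R)
      = ((t ^ (-((n : ℤ) ^ 2)) : Rˣ) : R) := by
    rw [← Units.val_mul, ← zpow_add]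
    congr 1
    push_cast
    ring
  simp only [← mul_assoc]
  rw [hcombine]
end
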